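/- Let δ = δ' + δ'' with δ, δ', δ'' ≥ 0. Let a ≤ b in R, X the segment from a to b, Q : [0,1] → R a curve with Q(0) = a, Q(1) = b and d_F(Q, X) ≤ δ', and P : [0,1] → R a curve with d_F(P, X) ≤ δ. If |Q(0) − P(0)| ≤ δ'' and |Q(1) − P(1)| ≤ δ'', then d_F(P, Q) ≤ δ. -/

import Mathlib

/-- Continuous Fréchet distance between curves on the unit interval. -/
noncomputable def frechetDist {E : Type*} [PseudoMetricSpace E] (P Q : unitInterval → E) : ℝ :=
  sInf {r : ℝ | ∃ f g : unitInterval → unitInterval,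
    Continuous f ∧ Monotone f ∧ Function.Surjective f ∧
    Continuous g ∧ Monotone g ∧ Function.Surjective g ∧
    ∀ t, dist (P (f t)) (Q (g t)) ≤ r}

/-- The directed line segment from `a` to `b`, parametrized linearly. -/
noncomputable def segCurve {E : Type*} [AddCommGroup E] [Module ℝ E] (a b : E) :
    unitInterval → E :=
  fun t => (1 - (t : ℝ)) • a + (t : ℝ) • b

/-- The polygonal curve with `n+1` vertices `p 0, …, p n`, parametrized uniformly. -/
noncomputable def polyCurve {E : Type*} [AddCommGroup E] [Module ℝ E]
    (n : ℕ) (p : Fin (n + 1) → E) (t : unitInterval) : E :=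
  let x : ℝ := (t : ℝ) * n
  let i : ℕ := min (Nat.floor x) (n - 1)
  (1 - (x - (i : ℝ))) • p ⟨min i n, Nat.lt_succ_of_le (min_le_right i n)⟩ +
    (x - (i : ℝ)) • p ⟨min (i + 1) n, Nat.lt_succ_of_le (min_le_right (i + 1) n)⟩

/-- The subcurve `Q[a,b]`, linearly reparametrized over the unit interval. -/
noncomputable def subcurve {E : Type*} (Q : unitInterval → E) (a b : unitInterval) :
    unitInterval → E :=
  fun s => Q ⟨(1 - (s : ℝ)) * (a : ℝ) + (s : ℝ) * (b : ℝ), Set.mem_Icc.mpr ⟨by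
      have hs0 := unitInterval.nonneg s; have hs1 := unitInterval.le_one s
      have ha0 := unitInterval.nonneg a; have hb0 := unitInterval.nonneg b
      have h1 : (0:ℝ) ≤ (1 - (s:ℝ)) * (a:ℝ) := mul_nonneg (by linarith) ha0
      have h2 : (0:ℝ) ≤ (s:ℝ) * (b:ℝ) := mul_nonneg hs0 hb0
      linarith, by
      have hs0 := unitInterval.nonneg s; have hs1 := unitInterval.le_one s
      have ha1 := unitInterval.le_one a; have hb1 := unitInterval.le_one b
      have h1 : (1 - (s:ℝ)) * (a:ℝ) ≤ (1 - (s:ℝ)) * 1 :=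
        mul_le_mul_of_nonneg_left ha1 (by linarith)
      have h2 : (s:ℝ) * (b:ℝ) ≤ (s:ℝ) * 1 := mul_le_mul_of_nonneg_left hb1 hs0
      linarith⟩⟩

/-- The parameter (in the uniform parametrization) of the `i`-th vertex of a
polygonal curve with `n` edges. -/
noncomputable def vparam (n : ℕ) (i : Fin (n + 1)) : unitInterval :=
  ⟨((i : ℕ) : ℝ) / (n : ℝ), Set.mem_Icc.mpr ⟨by positivity, by
    have h1 : ((i : ℕ) : ℝ) ≤ (n : ℝ) := by exact_mod_cast Nat.lt_succ_iff.mp i.isLt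
    rcases Nat.eq_zero_or_pos n with h | h
    · subst h; simp
    · rw [div_le_one (by exact_mod_cast h)]; exact h1⟩⟩

/-- `P` is `c`-monotone increasing. -/
def ApproxInc (c : ℝ) (P : unitInterval → ℝ) : Prop :=
  ∀ s t : unitInterval, s ≤ t → P s - c ≤ P t

/-- `P` is `c`-monotone decreasing. -/
def ApproxDec (c : ℝ) (P : unitInterval → ℝ) : Prop :=
  ∀ s t : unitInterval, s ≤ t → P t ≤ P s + c

/-- `P` is `c`-monotone. -/
def ApproxMono (c : ℝ) (P : unitInterval → ℝ) : Prop :=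
  ApproxInc c P ∨ ApproxDec c P

/-- Concatenation of two curves (first on `[0,1/2]`, second on `[1/2,1]`). -/
noncomputable def concatC {E : Type*} (P Q : unitInterval → E) : unitInterval → E :=
  fun t =>
    if h : (t : ℝ) ≤ 1 / 2 then
      P ⟨2 * (t : ℝ), Set.mem_Icc.mpr ⟨by have := unitInterval.nonneg t; linarith,
        by linarith⟩⟩
    else
      Q ⟨2 * (t : ℝ) - 1, Set.mem_Icc.mpr ⟨by push_neg at h; linarith,
        by have := unitInterval.le_one t; linarith⟩⟩

/-- The data of a `δ`-straightening of the curve `Q`: parameters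
`0 = t 0 < … < t (Fin.last ℓ) = 1` such that each shortcut segment is within
Fréchet distance `δ` of the corresponding subcurve (locality), and each
corresponding subcurve stays in the closed interval spanned by the shortcut's
endpoints (edge-range-preserving). -/
def StraighteningData (δ : ℝ) (Q : unitInterval → ℝ) (ℓ : ℕ)
    (t : Fin (ℓ + 1) → unitInterval) : Prop :=
  StrictMono t ∧ t 0 = 0 ∧ t (Fin.last ℓ) = 1 ∧
    ∀ i : Fin ℓ,
      frechetDist (segCurve (Q (t i.castSucc)) (Q (t i.succ)))
          (subcurve Q (t i.castSucc) (t i.succ)) ≤ δ ∧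
      ∀ s : unitInterval, t i.castSucc ≤ s → s ≤ t i.succ →
        Q s ∈ Set.uIcc (Q (t i.castSucc)) (Q (t i.succ))

/-- `Q'` is a `δ`-straightening of `Q`. -/
def IsStraightening (δ : ℝ) (Q Q' : unitInterval → ℝ) : Prop :=
  ∃ (ℓ : ℕ) (t : Fin (ℓ + 1) → unitInterval),
    StraighteningData δ Q ℓ t ∧ Q' = polyCurve ℓ (fun i => Q (t i))

/-- The data of a `δ`-signature of the curve `Q`: parameters
`0 = t 0 < … < t (Fin.last ℓ) = 1` with the locality property, non-degenerate
vertex-range-preserving interior vertices, and the `δ`-edge-length property. -/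
def SignatureData (δ : ℝ) (Q : unitInterval → ℝ) (ℓ : ℕ)
    (t : Fin (ℓ + 1) → unitInterval) : Prop :=
  StrictMono t ∧ t 0 = 0 ∧ t (Fin.last ℓ) = 1 ∧
    (∀ i : Fin ℓ,
      frechetDist (segCurve (Q (t i.castSucc)) (Q (t i.succ)))
          (subcurve Q (t i.castSucc) (t i.succ)) ≤ δ) ∧
    (∀ i : ℕ, ∀ _h1 : 0 < i, ∀ _h2 : i < ℓ,
      (Q (t ⟨i - 1, by omega⟩) < Q (t ⟨i, by omega⟩) ∧
        Q (t ⟨i + 1, by omega⟩) < Q (t ⟨i, by omega⟩) ∧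
        ∀ s : unitInterval, t ⟨i - 1, by omega⟩ ≤ s → s ≤ t ⟨i + 1, by omega⟩ →
          Q s ≤ Q (t ⟨i, by omega⟩)) ∨
      (Q (t ⟨i, by omega⟩) < Q (t ⟨i - 1, by omega⟩) ∧
        Q (t ⟨i, by omega⟩) < Q (t ⟨i + 1, by omega⟩) ∧
        ∀ s : unitInterval, t ⟨i - 1, by omega⟩ ≤ s → s ≤ t ⟨i + 1, by omega⟩ →
          Q (t ⟨i, by omega⟩) ≤ Q s)) ∧
    (∀ _h : 1 ≤ ℓ,
      δ < |Q (t ⟨1, by omega⟩) - Q (t 0)| ∧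
      δ < |Q (t (Fin.last ℓ)) - Q (t ⟨ℓ - 1, by omega⟩)|) ∧
    (∀ j : ℕ, ∀ _hj1 : 1 ≤ j, ∀ _hj2 : j + 2 ≤ ℓ,
      2 * δ < |Q (t ⟨j + 1, by omega⟩) - Q (t ⟨j, by omega⟩)|)

/-- `Q'` is a `δ`-signature of `Q`. -/
def IsSignature (δ : ℝ) (Q Q' : unitInterval → ℝ) : Prop :=
  ∃ (ℓ : ℕ) (t : Fin (ℓ + 1) → unitInterval),
    SignatureData δ Q ℓ t ∧ Q' = polyCurve ℓ (fun i => Q (t i))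

/-- Vertex `j` of the polygonal curve on `q` `δ`-visits vertex `a` of the
polygonal curve on `p` under the monotone traversal `(f, g)`: they are within
distance `δ`, and the traversal matches one of them to the other vertex or to the
interior of an edge incident to it. -/
def Visits (δ : ℝ) (m k : ℕ) (p : Fin (m + 1) → ℝ) (q : Fin (k + 1) → ℝ)
    (f g : unitInterval → unitInterval) (j : Fin (k + 1)) (a : Fin (m + 1)) : Prop :=
  |q j - p a| ≤ δ ∧
    ((∃ t : unitInterval, g t = vparam k j ∧ |(f t : ℝ) * (m : ℝ) - ((a : ℕ) : ℝ)| < 1) ∨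
     (∃ t : unitInterval, f t = vparam m a ∧ |(g t : ℝ) * (k : ℝ) - ((j : ℕ) : ℝ)| < 1))


/-!
A curve within Fréchet distance `δ` of the increasing segment from `a` to `b` is `2δ`-monotone
increasing and stays in `[a - δ, b + δ]`; this is all that is used about `P` and `Q`.

Sample both curves on a fine grid and build a monotone lattice path greedily: `P` leads with its
running maximum `M`, and `Q` advances to its last sample at or below `M - δ`. Whenever `M` jumps
it equals the current sample of `P`, and the samples of `Q` passed over lie above the previous
value of `M - δ` and at most `2δ'` above the new one, hence within `δ` of `P` because `δ' ≤ δ`;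
while `M` stays put, the current sample of `Q` sits just below `M - δ` (or is `Q 0 = a`), again
within `δ` of `P`. The endpoint conditions settle the first and last columns. Drawn on the grid,
the lattice path is a monotone path in `I × I`, and letting the mesh tend to `0` gives
`d_F(P, Q) ≤ δ`.
-/

open Set Filter unitInterval

section Frechet

variable {E : Type*} [PseudoMetricSpace E] {P Q : I → E} {r : ℝ}

theorem frechetDist_le_of_matching {f g : I → I}
    (hfc : Continuous f) (hfm : Monotone f) (hfs : Function.Surjective f)
    (hgc : Continuous g) (hgm : Monotone g) (hgs : Function.Surjective g)
    (h : ∀ t, dist (P (f t)) (Q (g t)) ≤ r) : frechetDist P Q ≤ r :=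
  csInf_le ⟨0, fun _ ⟨_, _, _, _, _, _, _, _, h⟩ => dist_nonneg.trans (h 0)⟩
    ⟨f, g, hfc, hfm, hfs, hgc, hgm, hgs, h⟩

theorem exists_matching_of_frechetDist_lt (hP : Continuous P) (hQ : Continuous Q)
    (h : frechetDist P Q < r) :
    ∃ f g : I → I, Continuous f ∧ Monotone f ∧ Function.Surjective f ∧
      Continuous g ∧ Monotone g ∧ Function.Surjective g ∧ ∀ t, dist (P (f t)) (Q (g t)) ≤ r := by
  obtain ⟨R, hR⟩ := (isCompact_range (hP.dist hQ)).bddAbove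
  have hne : Set.Nonempty {r : ℝ | ∃ f g : I → I,
      Continuous f ∧ Monotone f ∧ Function.Surjective f ∧
      Continuous g ∧ Monotone g ∧ Function.Surjective g ∧ ∀ t, dist (P (f t)) (Q (g t)) ≤ r} :=
    ⟨R, id, id, continuous_id, monotone_id, Function.surjective_id, continuous_id, monotone_id,
      Function.surjective_id, fun t => hR ⟨t, rfl⟩⟩
  obtain ⟨r', ⟨f, g, hfc, hfm, hfs, hgc, hgm, hgs, hfg⟩, hr'⟩ := exists_lt_of_csInf_lt hne h
  exact ⟨f, g, hfc, hfm, hfs, hgc, hgm, hgs, fun t => (hfg t).trans hr'.le⟩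

theorem surjective_of_continuous_of_map_zero_of_map_one {F : I → I} (hF : Continuous F)
    (h0 : F 0 = 0) (h1 : F 1 = 1) : Function.Surjective F :=
  fun y => intermediate_value_univ 0 1 hF (by rw [h0, h1]; exact ⟨nonneg', le_one'⟩)

theorem frechetDist_le_of_path (γ : Path ((0 : I), (0 : I)) (1, 1)) (hγ : Monotone γ)
    (h : ∀ t, dist (P (γ t).1) (Q (γ t).2) ≤ r) : frechetDist P Q ≤ r :=
  have hfc : Continuous fun t => (γ t).1 := continuous_fst.comp γ.continuous
  have hgc : Continuous fun t => (γ t).2 := continuous_snd.comp γ.continuous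
  frechetDist_le_of_matching hfc (monotone_fst.comp hγ)
    (surjective_of_continuous_of_map_zero_of_map_one hfc (by simp) (by simp))
    hgc (monotone_snd.comp hγ)
    (surjective_of_continuous_of_map_zero_of_map_one hgc (by simp) (by simp)) h

end Frechet

section Segment

variable {a b : ℝ}

theorem segCurve_apply (a b : ℝ) (t : I) : segCurve a b t = a + t * (b - a) := by
  simp only [segCurve, smul_eq_mul]; ring

theorem continuous_segCurve (a b : ℝ) : Continuous (segCurve a b) := by
  unfold segCurve; fun_prop

theorem monotone_segCurve (hab : a ≤ b) : Monotone (segCurve a b) := fun s t hst => by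
  simp only [segCurve_apply]
  have hst' : (s : ℝ) ≤ t := hst
  nlinarith

theorem segCurve_mem_Icc (hab : a ≤ b) (t : I) : segCurve a b t ∈ Icc a b := by
  have h₀ := monotone_segCurve hab (nonneg' : 0 ≤ t)
  have h₁ := monotone_segCurve hab (le_one' : t ≤ 1)
  simp only [segCurve_apply, Icc.coe_zero, Icc.coe_one] at h₀ h₁ ⊢
  constructor <;> linarith

variable {P : I → ℝ} {r δ : ℝ}

theorem approxInc_of_matching_segCurve (hab : a ≤ b) {f g : I → I} (hfm : Monotone f)
    (hfs : Function.Surjective f) (hgm : Monotone g)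
    (h : ∀ t, dist (P (f t)) (segCurve a b (g t)) ≤ r) : ApproxInc (2 * r) P := by
  intro s t hst
  rcases hst.eq_or_lt with rfl | hlt
  · obtain ⟨s', -⟩ := hfs s
    linarith [dist_nonneg.trans (h s')]
  obtain ⟨s', rfl⟩ := hfs s
  obtain ⟨t', rfl⟩ := hfs t
  have hX := monotone_segCurve hab (hgm (hfm.reflect_lt hlt).le)
  have hs := abs_le.1 (h s')
  have ht := abs_le.1 (h t')
  linarith [hs.2, ht.1]

theorem mem_Icc_of_matching_segCurve (hab : a ≤ b) {f g : I → I} (hfs : Function.Surjective f)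
    (h : ∀ t, dist (P (f t)) (segCurve a b (g t)) ≤ r) (t : I) : P t ∈ Icc (a - r) (b + r) := by
  obtain ⟨t', rfl⟩ := hfs t
  have hX := segCurve_mem_Icc hab (g t')
  have ht := abs_le.1 (h t')
  constructor <;> linarith [hX.1, hX.2, ht.1, ht.2]

theorem approxInc_and_mem_Icc_of_frechetDist_segCurve_le (hab : a ≤ b) (hP : Continuous P)
    (h : frechetDist P (segCurve a b) ≤ δ) :
    ApproxInc (2 * δ) P ∧ ∀ t, P t ∈ Icc (a - δ) (b + δ) := by
  have key : ∀ ε > 0, ApproxInc (2 * (δ + ε)) P ∧ ∀ t, P t ∈ Icc (a - (δ + ε)) (b + (δ + ε)) := by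
    intro ε hε
    obtain ⟨f, g, -, hfm, hfs, -, hgm, -, hfg⟩ :=
      exists_matching_of_frechetDist_lt hP (continuous_segCurve a b) (by linarith : _ < δ + ε)
    exact ⟨approxInc_of_matching_segCurve hab hfm hfs hgm hfg,
      mem_Icc_of_matching_segCurve hab hfs hfg⟩
  refine ⟨fun s t hst => ?_, fun t => ⟨?_, ?_⟩⟩ <;> refine le_of_forall_pos_lt_add fun ε hε => ?_
  · linarith [(key (ε / 4) (by positivity)).1 s t hst]
  · linarith [((key (ε / 2) (by positivity)).2 t).1]
  · linarith [((key (ε / 2) (by positivity)).2 t).2]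

end Segment

section MonotonePath

variable {X : Type*} [TopologicalSpace X] [Preorder X]

theorem Path.monotone_trans {x y z : X} {γ : Path x y} {γ' : Path y z} (hγ : Monotone γ)
    (hγ' : Monotone γ') : Monotone (γ.trans γ') := by
  intro s t hst
  have hst' : (s : ℝ) ≤ t := hst
  simp only [Path.trans_apply]
  split_ifs with hs ht ht
  · exact hγ (Subtype.mk_le_mk.2 (by linarith))
  · calc _ ≤ γ 1 := hγ le_one'
      _ = γ' 0 := by simp
      _ ≤ _ := hγ' nonneg'
  · linarith
  · exact hγ' (Subtype.mk_le_mk.2 (by linarith))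

theorem Path.mem_Icc_of_monotone {x y : X} {γ : Path x y} (hγ : Monotone γ) (t : I) :
    γ t ∈ Icc x y := by
  simpa using And.intro (hγ (nonneg' : 0 ≤ t)) (hγ (le_one' : t ≤ 1))

end MonotonePath

def unitInterval.monotonePath {x y : I} (h : x ≤ y) : Path x y where
  toFun u := max x (min y u)
  continuous_toFun := by fun_prop
  source' := by simp
  target' := by simp [min_eq_left (le_one' : y ≤ 1), h]

theorem unitInterval.monotone_monotonePath {x y : I} (h : x ≤ y) : Monotone (monotonePath h) :=
  fun _ _ huv => max_le_max le_rfl (min_le_min le_rfl huv)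

inductive LatticePath (good : ℕ → ℕ → Prop) : ℕ → ℕ → Prop
  | base : good 0 0 → LatticePath good 0 0
  | right {i j : ℕ} : LatticePath good i j → good (i + 1) j → LatticePath good (i + 1) j
  | up {i j : ℕ} : LatticePath good i j → good i (j + 1) → LatticePath good i (j + 1)

namespace LatticePath

variable {good : ℕ → ℕ → Prop} {i j : ℕ}

theorem good_end (h : LatticePath good i j) : good i j := by
  cases h <;> assumption

theorem up_run (h : LatticePath good i j) {j' : ℕ} (hjj' : j ≤ j')
    (hgood : ∀ k, j < k → k ≤ j' → good i k) : LatticePath good i j' := by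
  induction j', hjj' using Nat.le_induction with
  | base => exact h
  | succ k hk ih =>
    exact (ih fun l hl hl' => hgood l hl (hl'.trans k.le_succ)).up (hgood (k + 1) (by omega) le_rfl)

theorem of_staircase {N : ℕ} (J : ℕ → ℕ) (hJ : Monotone J) (hJN : J N ≤ N)
    (h₀ : good 0 0) (hcol₀ : ∀ j, 0 < j → j ≤ J 0 → good 0 j)
    (hright : ∀ i, good (i + 1) (J i)) (hup : ∀ i j, J i < j → j ≤ J (i + 1) → good (i + 1) j)
    (hlast : ∀ j, J N < j → j ≤ N → good N j) : LatticePath good N N := by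
  have hstair : ∀ i, LatticePath good i (J i) := by
    intro i
    induction i with
    | zero => exact (base h₀).up_run (Nat.zero_le _) hcol₀
    | succ i ih => exact (ih.right (hright i)).up_run (hJ i.le_succ) (hup i)
  exact (hstair N).up_run hJN hlast

theorem exists_path {cl : ℕ → I} (hcl : Monotone cl) (h : LatticePath good i j) :
    ∃ γ : Path (cl 0, cl 0) (cl i, cl j), Monotone γ ∧
      ∀ p ∈ range γ, ∃ k l, good k l ∧ p ∈ Icc (cl k, cl l) (cl (k + 1), cl (l + 1)) := by
  induction h with
  | base h₀ =>
    refine ⟨Path.refl _, monotone_const, ?_⟩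
    rintro _ ⟨t, rfl⟩
    exact ⟨0, 0, h₀, by simpa using And.intro (hcl (Nat.zero_le 1)) (hcl (Nat.zero_le 1))⟩
  | @right i j hij _ ih =>
    obtain ⟨γ, hγ, hcells⟩ := ih
    let step := (monotonePath (hcl i.le_succ)).prod (Path.refl (cl j))
    have hstep : Monotone step := fun s t hst =>
      Prod.mk_le_mk.2 ⟨monotone_monotonePath _ hst, le_rfl⟩
    refine ⟨γ.trans step, Path.monotone_trans hγ hstep, ?_⟩
    rw [Path.trans_range]
    rintro p (hp | ⟨t, rfl⟩)
    · exact hcells p hp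
    · refine ⟨i, j, hij.good_end, (Path.mem_Icc_of_monotone hstep t).1, ?_⟩
      exact (Path.mem_Icc_of_monotone hstep t).2.trans (Prod.mk_le_mk.2 ⟨le_rfl, hcl j.le_succ⟩)
  | @up i j hij _ ih =>
    obtain ⟨γ, hγ, hcells⟩ := ih
    let step := (Path.refl (cl i)).prod (monotonePath (hcl j.le_succ))
    have hstep : Monotone step := fun s t hst =>
      Prod.mk_le_mk.2 ⟨le_rfl, monotone_monotonePath _ hst⟩
    refine ⟨γ.trans step, Path.monotone_trans hγ hstep, ?_⟩
    rw [Path.trans_range]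
    rintro p (hp | ⟨t, rfl⟩)
    · exact hcells p hp
    · refine ⟨i, j, hij.good_end, (Path.mem_Icc_of_monotone hstep t).1, ?_⟩
      exact (Path.mem_Icc_of_monotone hstep t).2.trans (Prod.mk_le_mk.2 ⟨hcl i.le_succ, le_rfl⟩)

end LatticePath

section Discrete

variable {f g : ℕ → ℝ} {N : ℕ} {r e y : ℝ}

theorem partialSups_le_add_of_approxInc (hf : ∀ i i', i ≤ i' → f i - r ≤ f i') (i : ℕ) :
    partialSups f i ≤ f i + r :=
  partialSups_le f i _ fun k hk => by linarith [hf k i hk]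

theorem partialSups_add_one_le_add (he : 0 ≤ e) (hf : ∀ i, f (i + 1) ≤ f i + e) (i : ℕ) :
    partialSups f (i + 1) ≤ partialSups f i + e := by
  rw [partialSups_add_one]
  exact sup_le (by linarith) ((hf i).trans (by linarith [le_partialSups f i]))

theorem partialSups_add_one_eq_of_lt {i : ℕ} (h : partialSups f i < partialSups f (i + 1)) :
    partialSups f (i + 1) = f (i + 1) := by
  rw [partialSups_add_one] at h ⊢
  exact sup_eq_right.2 (le_of_not_ge fun h' => h.ne (sup_eq_left.2 h').symm)

/-- Also `0` when no `j ≤ N` has `g j ≤ y`. -/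
noncomputable def lastIndexLE (g : ℕ → ℝ) (N : ℕ) (y : ℝ) : ℕ :=
  Nat.findGreatest (fun j => g j ≤ y) N

theorem lastIndexLE_le : lastIndexLE g N y ≤ N :=
  Nat.findGreatest_le N

theorem lastIndexLE_mono : Monotone (lastIndexLE g N) :=
  fun _ _ hyy' => Nat.findGreatest_mono_left (fun _ h => h.trans hyy') N

theorem lt_of_lastIndexLE_lt {j : ℕ} (hj : lastIndexLE g N y < j) (hjN : j ≤ N) : y < g j :=
  not_le.1 (Nat.findGreatest_is_greatest hj hjN)

theorem le_of_lastIndexLE_ne_zero (h : lastIndexLE g N y ≠ 0) : g (lastIndexLE g N y) ≤ y :=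
  Nat.findGreatest_of_ne_zero rfl h

theorem lastIndexLE_le_max : g (lastIndexLE g N y) ≤ max (g 0) y := by
  by_cases h : lastIndexLE g N y = 0
  · rw [h]; exact le_max_left _ _
  · exact (le_of_lastIndexLE_ne_zero h).trans (le_max_right _ _)

theorem sub_le_lastIndexLE (he : 0 ≤ e) (hg : ∀ j, g (j + 1) ≤ g j + e) (hy : y ≤ g N) :
    y - e ≤ g (lastIndexLE g N y) := by
  rcases lastIndexLE_le.lt_or_eq with hlt | heq
  · linarith [lt_of_lastIndexLE_lt (Nat.lt_succ_self (lastIndexLE g N y)) hlt,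
      hg (lastIndexLE g N y)]
  · rw [heq]; linarith

end Discrete

theorem latticePath_of_approxInc {f g : ℕ → ℝ} {N : ℕ} {a b δ' δ'' e : ℝ}
    (hδ'' : 0 ≤ δ'') (he : 0 ≤ e)
    (hf : ∀ i i', i ≤ i' → f i - 2 * (δ' + δ'') ≤ f i')
    (hfI : ∀ i, f i ∈ Icc (a - (δ' + δ'')) (b + (δ' + δ'')))
    (hg : ∀ j j', j ≤ j' → g j - 2 * δ' ≤ g j') (hgI : ∀ j, g j ∈ Icc (a - δ') (b + δ'))
    (hf_step : ∀ i, f (i + 1) ≤ f i + e) (hg_step : ∀ j, g (j + 1) ≤ g j + e)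
    (hf₀ : f 0 ≤ a + δ'') (hfN : b - δ'' ≤ f N) (hg₀ : g 0 = a) (hgN : g N = b) :
    LatticePath (fun i j => |f i - g j| ≤ δ' + δ'' + 2 * e) N N := by
  set δ := δ' + δ''
  set M := partialSups f
  set J := fun i => lastIndexLE g N (M i - δ)
  have hfM : ∀ i, f i ≤ M i := le_partialSups f
  have hMf : ∀ i, M i ≤ f i + 2 * δ := partialSups_le_add_of_approxInc hf
  have hMb : ∀ i, M i ≤ b + δ := fun i => partialSups_le f i _ fun k _ => (hfI k).2
  have hM_step := partialSups_add_one_le_add he hf_step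
  have hJ_low : ∀ i, M i - δ - e ≤ g (J i) := fun i =>
    sub_le_lastIndexLE he hg_step (by rw [hgN]; linarith [hMb i])
  have hJ_high : ∀ i, g (J i) ≤ a ∨ g (J i) ≤ M i - δ := fun i =>
    le_max_iff.1 (hg₀ ▸ lastIndexLE_le_max)
  have hcol : ∀ i j, M i = f i → 0 < j → j ≤ J i → g j ≤ f i - δ + 2 * δ' :=
    fun i j hMi hj hjJ => by
      linarith [hg j (J i) hjJ, le_of_lastIndexLE_ne_zero (y := M i - δ) (by omega : J i ≠ 0)]
  refine LatticePath.of_staircase J (fun i i' h => lastIndexLE_mono (by linarith [M.mono h]))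
    lastIndexLE_le ?_ ?_ ?_ ?_ ?_
  · rw [hg₀, abs_le]
    constructor <;> linarith [(hfI 0).1, (hgI 0).1]
  · intro j hj hjJ
    have := hcol 0 j (partialSups_zero f) hj hjJ
    rw [abs_le]
    constructor <;> linarith [(hgI j).1]
  · intro i
    rw [abs_le]
    rcases hJ_high i with h | h <;>
      constructor <;> linarith [hJ_low i, hM_step i, hfM (i + 1), hMf (i + 1), M.mono i.le_succ,
        (hfI (i + 1)).1]
  · intro i j hij hj
    have hjump : M i < M (i + 1) := lt_of_le_of_ne (M.mono i.le_succ) fun h => by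
      have : J i = J (i + 1) := by simp only [J, h]
      omega
    have hact := partialSups_add_one_eq_of_lt hjump
    have := hcol (i + 1) j hact (by omega) hj
    have := lt_of_lastIndexLE_lt hij (hj.trans lastIndexLE_le)
    rw [abs_le]
    constructor <;> linarith [hM_step i]
  · intro j hj hjN
    have := lt_of_lastIndexLE_lt hj hjN
    rw [abs_le]
    constructor <;> linarith [(hgI j).2, hfM N]

section Grid

/-- The point `k / N`, clamped to `1` for `k > N`. -/
noncomputable def unitGrid (N k : ℕ) : I :=
  projIcc 0 1 zero_le_one ((k : ℝ) / N)

theorem monotone_unitGrid (N : ℕ) : Monotone (unitGrid N) := fun _ _ hkl =>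
  monotone_projIcc _ (div_le_div_of_nonneg_right (Nat.cast_le.2 hkl) N.cast_nonneg)

theorem unitGrid_zero (N : ℕ) : unitGrid N 0 = 0 := by
  simp [unitGrid]

theorem unitGrid_self {N : ℕ} (hN : N ≠ 0) : unitGrid N N = 1 := by
  simp [unitGrid, hN]

theorem dist_unitGrid_le {N k : ℕ} {x : I} (hx : x ∈ Icc (unitGrid N k) (unitGrid N (k + 1))) :
    dist x (unitGrid N k) ≤ 1 / N := by
  have hx₁ : ((unitGrid N k : I) : ℝ) ≤ x := hx.1
  have hx₂ : (x : ℝ) ≤ unitGrid N (k + 1) := hx.2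
  have h : |(unitGrid N (k + 1) : ℝ) - unitGrid N k| ≤ |((k + 1 : ℕ) : ℝ) / N - k / N| :=
    abs_projIcc_sub_projIcc _
  have hstep : ((k + 1 : ℕ) : ℝ) / N - k / N = 1 / N := by push_cast; ring
  rw [hstep, abs_of_nonneg (by positivity : (0 : ℝ) ≤ 1 / N)] at h
  rw [Subtype.dist_eq, Real.dist_eq, abs_of_nonneg (by linarith)]
  linarith [le_abs_self ((unitGrid N (k + 1) : ℝ) - unitGrid N k)]

theorem apply_unitGrid_add_one_le {R : I → ℝ} {N : ℕ} {e : ℝ}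
    (hR : ∀ k, ∀ x ∈ Icc (unitGrid N k) (unitGrid N (k + 1)), dist (R x) (R (unitGrid N k)) ≤ e)
    (k : ℕ) : R (unitGrid N (k + 1)) ≤ R (unitGrid N k) + e := by
  linarith [(abs_le.1 (hR k _ ⟨monotone_unitGrid N k.le_succ, le_rfl⟩)).2]

variable {E : Type*} [PseudoMetricSpace E]

theorem eventually_dist_unitGrid_le {P : I → E} (hP : Continuous P) {e : ℝ} (he : 0 < e) :
    ∀ᶠ N in atTop, ∀ k, ∀ x ∈ Icc (unitGrid N k) (unitGrid N (k + 1)),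
      dist (P x) (P (unitGrid N k)) ≤ e := by
  obtain ⟨η, hη, hPη⟩ :=
    Metric.uniformContinuous_iff.1 (CompactSpace.uniformContinuous_of_continuous hP) e he
  filter_upwards [tendsto_one_div_atTop_nhds_zero_nat.eventually (gt_mem_nhds hη)] with N hN k x hx
  exact (hPη ((dist_unitGrid_le hx).trans_lt hN)).le

theorem dist_le_of_mem_Icc_grid {P Q : I → E} {cl : ℕ → I} {C e : ℝ}
    (hP : ∀ k, ∀ x ∈ Icc (cl k) (cl (k + 1)), dist (P x) (P (cl k)) ≤ e)
    (hQ : ∀ l, ∀ y ∈ Icc (cl l) (cl (l + 1)), dist (Q y) (Q (cl l)) ≤ e)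
    {k l : ℕ} (hkl : dist (P (cl k)) (Q (cl l)) ≤ C) {p : I × I}
    (hp : p ∈ Icc (cl k, cl l) (cl (k + 1), cl (l + 1))) : dist (P p.1) (Q p.2) ≤ C + 2 * e := by
  have h₁ := hP k p.1 ⟨hp.1.1, hp.2.1⟩
  have h₂ := hQ l p.2 ⟨hp.1.2, hp.2.2⟩
  rw [dist_comm] at h₂
  linarith [dist_triangle4 (P p.1) (P (cl k)) (Q (cl l)) (Q p.2)]

end Grid

theorem frechetDist_le_signatureEdge_endpoints_general (δ δ' δ'' : ℝ)
    (hδ'' : 0 ≤ δ'') (hsum : δ = δ' + δ'')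
    (a b : ℝ) (hab : a ≤ b)
    (Q : unitInterval → ℝ) (hQc : Continuous Q) (hQ0 : Q 0 = a) (hQ1 : Q 1 = b)
    (hQX : frechetDist Q (segCurve a b) ≤ δ')
    (P : unitInterval → ℝ) (hPc : Continuous P)
    (hPX : frechetDist P (segCurve a b) ≤ δ)
    (h0 : |Q 0 - P 0| ≤ δ'') (h1 : |Q 1 - P 1| ≤ δ'') :
    frechetDist P Q ≤ δ := by
  subst hsum
  obtain ⟨hPinc, hPI⟩ := approxInc_and_mem_Icc_of_frechetDist_segCurve_le hab hPc hPX
  obtain ⟨hQinc, hQI⟩ := approxInc_and_mem_Icc_of_frechetDist_segCurve_le hab hQc hQX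
  refine le_of_forall_pos_le_add fun ε hε => ?_
  obtain ⟨N, hN, hPosc, hQosc⟩ := ((eventually_ne_atTop 0).and
    ((eventually_dist_unitGrid_le hPc (e := ε / 4) (by positivity)).and
      (eventually_dist_unitGrid_le hQc (e := ε / 4) (by positivity)))).exists
  have hpath := latticePath_of_approxInc (f := fun i => P (unitGrid N i))
    (g := fun j => Q (unitGrid N j)) hδ'' (by positivity)
    (fun i i' h => hPinc _ _ (monotone_unitGrid N h)) (fun i => hPI _)
    (fun j j' h => hQinc _ _ (monotone_unitGrid N h)) (fun j => hQI _)
    (apply_unitGrid_add_one_le hPosc) (apply_unitGrid_add_one_le hQosc)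
    (by rw [unitGrid_zero]; linarith [(abs_le.1 h0).1])
    (by rw [unitGrid_self hN]; linarith [(abs_le.1 h1).2])
    (by rw [unitGrid_zero, hQ0]) (by rw [unitGrid_self hN, hQ1])
  obtain ⟨γ, hγ, hcells⟩ := hpath.exists_path (monotone_unitGrid N)
  refine (frechetDist_le_of_path (γ.cast (by rw [unitGrid_zero]) (by rw [unitGrid_self hN])) hγ
    fun t => ?_).trans (by linarith : δ' + δ'' + 2 * (ε / 4) + 2 * (ε / 4) ≤ δ' + δ'' + ε)
  obtain ⟨k, l, hkl, hp⟩ := hcells (γ t) ⟨t, rfl⟩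
  exact dist_le_of_mem_Icc_grid hPosc hQosc hkl hp

/-- Segment-proxy lemma for signature edges, endpoint case (i). -/
theorem frechetDist_le_signatureEdge_endpoints (δ δ' δ'' : ℝ)
    (hδ' : 0 ≤ δ') (hδ'' : 0 ≤ δ'') (hsum : δ = δ' + δ'')
    (a b : ℝ) (hab : a ≤ b)
    (Q : unitInterval → ℝ) (hQc : Continuous Q) (hQ0 : Q 0 = a) (hQ1 : Q 1 = b)
    (hQX : frechetDist Q (segCurve a b) ≤ δ')
    (P : unitInterval → ℝ) (hPc : Continuous P)
    (hPX : frechetDist P (segCurve a b) ≤ δ)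
    (h0 : |Q 0 - P 0| ≤ δ'') (h1 : |Q 1 - P 1| ≤ δ'') :
    frechetDist P Q ≤ δ :=
  frechetDist_le_signatureEdge_endpoints_general δ δ' δ'' hδ'' hsum a b hab Q hQc hQ0 hQ1 hQX P hPc
    hPX h0 h1
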